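/- arXiv:math/0005259 — 2 statements merged into one kernel-verified Lean document; each statement's English description precedes it below -/
import Mathlib

section
/- The assignment J ↦ V(J) is a bijection from the set of orthogonal complex structures on Euclidean ℝ^{2m} (linear isometries J with J² = -Id) onto the set of maximal isotropic subspaces of ℂ^{2m} with respect to the ℂ-bilinear dot product B; that is, the map is injective, and every m-dimensional subspace W ⊆ ℂ^{2m} on which B vanishes identically equals V(J) for a unique orthogonal complex structure J. -/
/-! If `W` is totally isotropic, the real part `Re : W → ℝ^{2m}` is injective: a vector `v = i·u`
with `u` real has `B(v, v) = -|u|²`. Both sides have real dimension `2m`, so `Re` is an isomorphism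
and `W` is the graph `{v₀ + i·J v₀}` of the real-linear map `J = Im ∘ Re⁻¹`. Stability of `W` under
multiplication by `i` forces `J² = -1`, and the real part of `B(v₀ + i·Jv₀, w₀ + i·Jw₀) = 0` reads
`⟨Jv₀, Jw₀⟩ = ⟨v₀, w₀⟩`. Injectivity of `J ↦ V(J)` is read off imaginary parts. -/

open Matrix

/-- `V(J) = {v₀ + i·J_ℂ v₀ : v₀ ∈ ℝ^{2m}} ⊆ ℂ^{2m}`, for an orthogonal complex structure
given by the matrix `J`, with `J_ℂ` its complexification. -/
def VJset (m : ℕ) (J : Matrix (Fin (2 * m)) (Fin (2 * m)) ℝ) : Set (Fin (2 * m) → ℂ) :=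
  {v | ∃ v₀ : Fin (2 * m) → ℝ,
    v = (fun i => (v₀ i : ℂ)) +
        Complex.I • (J.map (fun x => (x : ℂ))).mulVec (fun i => (v₀ i : ℂ))}

section

variable {ι : Type*} [Fintype ι]

def complexGraph (J : Matrix ι ι ℝ) (v₀ : ι → ℝ) : ι → ℂ := fun i => ⟨v₀ i, (J *ᵥ v₀) i⟩

@[simp] lemma re_complexGraph (J : Matrix ι ι ℝ) (v₀ : ι → ℝ) (i : ι) :
    (complexGraph J v₀ i).re = v₀ i := rfl

@[simp] lemma im_complexGraph (J : Matrix ι ι ℝ) (v₀ : ι → ℝ) (i : ι) :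
    (complexGraph J v₀ i).im = (J *ᵥ v₀) i := rfl

lemma mem_range_complexGraph_iff {J : Matrix ι ι ℝ} {v : ι → ℂ} :
    v ∈ Set.range (complexGraph J) ↔ (fun i => (v i).im) = J *ᵥ fun i => (v i).re := by
  constructor
  · rintro ⟨v₀, rfl⟩
    rfl
  · intro h
    exact ⟨fun i => (v i).re, funext fun i => Complex.ext rfl (congrFun h i).symm⟩

lemma range_complexGraph_injective :
    Function.Injective fun J : Matrix ι ι ℝ => Set.range (complexGraph J) := by
  intro J₁ J₂ h
  refine ext_iff_mulVec.mpr fun v₀ => ?_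
  have hmem : complexGraph J₁ v₀ ∈ Set.range (complexGraph J₂) := by
    rw [← show Set.range (complexGraph J₁) = Set.range (complexGraph J₂) from h]
    exact ⟨v₀, rfl⟩
  exact mem_range_complexGraph_iff.mp hmem

lemma eq_zero_of_re_eq_zero_of_sum_mul_self_eq_zero {v : ι → ℂ} (hre : ∀ i, (v i).re = 0)
    (hv : ∑ i, v i * v i = 0) : v = 0 := by
  have him : ∑ i, (v i).im ^ 2 = 0 := by
    simpa [Complex.re_sum, Complex.mul_re, hre, sq] using congrArg Complex.re hv
  funext i
  refine Complex.ext (hre i) ?_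
  simpa using (Finset.sum_eq_zero_iff_of_nonneg fun i _ => sq_nonneg _).mp him i
    (Finset.mem_univ i)

lemma exists_range_complexGraph_eq_of_isotropic (W : Submodule ℂ (ι → ℂ))
    (hW : ∀ v ∈ W, ∀ w ∈ W, ∑ i, v i * w i = 0)
    (hdim : 2 * Module.finrank ℂ W = Fintype.card ι) :
    ∃ J : Matrix ι ι ℝ, (W : Set (ι → ℂ)) = Set.range (complexGraph J) := by
  classical
  let re : W →ₗ[ℝ] ι → ℝ := Complex.reLm.compLeft ι ∘ₗ W.subtype.restrictScalars ℝ
  have hre : Function.Injective re := by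
    refine (injective_iff_map_eq_zero re).mpr fun v hv => Subtype.ext ?_
    exact eq_zero_of_re_eq_zero_of_sum_mul_self_eq_zero (congrFun hv) (hW v v.2 v v.2)
  have hrank : Module.finrank ℝ W = Module.finrank ℝ (ι → ℝ) := by
    rw [finrank_real_of_complex, hdim, Module.finrank_fintype_fun_eq_card]
  let e := re.linearEquivOfInjective hre hrank
  let J := LinearMap.toMatrix' (Complex.imLm.compLeft ι ∘ₗ W.subtype.restrictScalars ℝ ∘ₗ
    e.symm.toLinearMap)
  have hgraph : ∀ v₀, complexGraph J v₀ = e.symm v₀ := fun v₀ => by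
    funext i
    refine Complex.ext ?_ ?_
    · exact (congrFun (e.apply_symm_apply v₀) i).symm
    · simp [J]
  refine ⟨J, Set.Subset.antisymm (fun v hv => ⟨e ⟨v, hv⟩, ?_⟩) ?_⟩
  · rw [hgraph, e.symm_apply_apply]
  · rintro _ ⟨v₀, rfl⟩
    rw [hgraph]
    exact (e.symm v₀).2

lemma mul_self_eq_neg_one_of_range_complexGraph_eq [DecidableEq ι] (W : Submodule ℂ (ι → ℂ))
    {J : Matrix ι ι ℝ} (hJ : (W : Set (ι → ℂ)) = Set.range (complexGraph J)) :
    J * J = -1 := by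
  refine ext_iff_mulVec.mpr fun v₀ => ?_
  have hmem : Complex.I • complexGraph J v₀ ∈ Set.range (complexGraph J) := by
    rw [← hJ]
    exact W.smul_mem _ (by rw [← SetLike.mem_coe, hJ]; exact ⟨v₀, rfl⟩)
  have h := mem_range_complexGraph_iff.mp hmem
  simp only [Pi.smul_apply, smul_eq_mul, Complex.mul_re, Complex.mul_im, Complex.I_re,
    Complex.I_im, re_complexGraph, im_complexGraph, zero_mul, one_mul, zero_sub, zero_add] at h
  change v₀ = J *ᵥ -(J *ᵥ v₀) at h
  rw [mulVec_neg, mulVec_mulVec] at h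
  rw [neg_mulVec, one_mulVec]
  exact neg_eq_iff_eq_neg.mp h.symm

lemma transpose_mul_self_eq_one_of_isotropic [DecidableEq ι] {J : Matrix ι ι ℝ}
    (hJ : ∀ v₀ w₀, ∑ i, complexGraph J v₀ i * complexGraph J w₀ i = 0) : Jᵀ * J = 1 := by
  have hdot : ∀ v₀ w₀, (J *ᵥ v₀) ⬝ᵥ (J *ᵥ w₀) = v₀ ⬝ᵥ w₀ := by
    intro v₀ w₀
    have h := congrArg Complex.re (hJ v₀ w₀)
    simp only [Complex.re_sum, Complex.mul_re, re_complexGraph, im_complexGraph,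
      Finset.sum_sub_distrib, Complex.zero_re] at h
    exact (sub_eq_zero.mp h).symm
  ext i j
  have h := hdot (Pi.single i 1) (Pi.single j 1)
  rw [mulVec_single_one, mulVec_single_one, single_dotProduct, one_mul, Pi.single_apply] at h
  rw [mul_apply', one_apply]
  exact h

end

lemma VJset_eq_range_complexGraph (m : ℕ) (J : Matrix (Fin (2 * m)) (Fin (2 * m)) ℝ) :
    VJset m J = Set.range (complexGraph J) := by
  have hgraph : ∀ v₀, complexGraph J v₀ = (fun i => (v₀ i : ℂ)) +
      Complex.I • (J.map (fun x => (x : ℂ))).mulVec (fun i => (v₀ i : ℂ)) := fun v₀ => by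
    funext i
    have hmap : ((J.map fun x => (x : ℂ)) *ᵥ fun i => (v₀ i : ℂ)) i = ((J *ᵥ v₀) i : ℂ) :=
      (RingHom.map_mulVec Complex.ofRealHom J v₀ i).symm
    rw [Pi.add_apply, Pi.smul_apply, hmap]
    apply Complex.ext <;> simp
  ext v
  simp only [VJset, Set.mem_ofPred_eq, Set.mem_range, hgraph, eq_comm]

lemma VJset_injective (m : ℕ) : Function.Injective (VJset m) := fun J₁ J₂ h =>
  range_complexGraph_injective <| by
    simpa only [VJset_eq_range_complexGraph] using h

/-- `J ↦ V(J)` is a bijection from the orthogonal complex structures on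
Euclidean `ℝ^{2m}` onto the maximal isotropic subspaces of `(ℂ^{2m}, B)`: it is injective,
and every `m`-dimensional totally isotropic subspace `W` equals `V(J)` for a unique `J`. -/
theorem VJ_bijection_maximal_isotropic (m : ℕ) :
    (∀ J₁ J₂ : Matrix (Fin (2 * m)) (Fin (2 * m)) ℝ,
      J₁ᵀ * J₁ = 1 → J₁ * J₁ = -1 → J₂ᵀ * J₂ = 1 → J₂ * J₂ = -1 →
      VJset m J₁ = VJset m J₂ → J₁ = J₂) ∧
    (∀ W : Submodule ℂ (Fin (2 * m) → ℂ),
      Module.finrank ℂ W = m →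
      (∀ v ∈ W, ∀ w ∈ W, ∑ i, v i * w i = 0) →
      ∃! J : Matrix (Fin (2 * m)) (Fin (2 * m)) ℝ,
        (Jᵀ * J = 1 ∧ J * J = -1) ∧ (W : Set (Fin (2 * m) → ℂ)) = VJset m J) := by
  refine ⟨fun J₁ J₂ _ _ _ _ h => VJset_injective m h, fun W hdim hW => ?_⟩
  obtain ⟨J, hJ⟩ := exists_range_complexGraph_eq_of_isotropic W hW (by simp [hdim])
  have hWJ : (W : Set (Fin (2 * m) → ℂ)) = VJset m J :=
    hJ.trans (VJset_eq_range_complexGraph m J).symm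
  have hmem : ∀ v₀, complexGraph J v₀ ∈ W := fun v₀ => by
    rw [← SetLike.mem_coe, hJ]
    exact ⟨v₀, rfl⟩
  have hiso : ∀ v₀ w₀, ∑ i, complexGraph J v₀ i * complexGraph J w₀ i = 0 := fun v₀ w₀ =>
    hW _ (hmem v₀) _ (hmem w₀)
  refine ⟨J, ⟨⟨transpose_mul_self_eq_one_of_isotropic hiso,
    mul_self_eq_neg_one_of_range_complexGraph_eq W hJ⟩, hWJ⟩, ?_⟩
  rintro J' ⟨-, hWJ'⟩
  exact VJset_injective m (hWJ'.symm.trans hWJ)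
end

section
/- Let Cl be the ℂ-Clifford algebra of the quadratic form Q(v) = -B(v,v) on ℂ^{2m}, let e_1, f_1, …, e_m, f_m be an orthonormal system (B(e_j,e_k) = B(f_j,f_k) = δ_{jk}, B(e_j,f_k) = 0), set ε̄_j = (e_j + i f_j)/√2, and let M be a module over Cl. If σ ∈ M satisfies ε̄_j·σ = 0 for every j = 1, …, m, then the complex volume element ω_ℂ = i^m·e_1·f_1·⋯·e_m·f_m acts as the identity on σ: ω_ℂ·σ = σ. -/
/-- The ℂ-bilinear dot product on `ℂ^n`. -/
noncomputable def Bdot (n : ℕ) : (Fin n → ℂ) →ₗ[ℂ] (Fin n → ℂ) →ₗ[ℂ] ℂ :=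
  LinearMap.mk₂ ℂ (fun v w => ∑ i, v i * w i)
    (fun v v' w => by simp [add_mul, Finset.sum_add_distrib])
    (fun c v w => by simp [Finset.mul_sum, mul_assoc])
    (fun v w w' => by simp [mul_add, Finset.sum_add_distrib])
    (fun c v w => by simp [Finset.mul_sum, mul_left_comm])

/-- The quadratic form `Q(v) = -B(v,v)` on `ℂ^n`, so that in the Clifford algebra
`v·v = -B(v,v)·1` (the Lawson–Michelsohn sign convention). -/
noncomputable def QCl (n : ℕ) : QuadraticForm ℂ (Fin n → ℂ) :=
  LinearMap.BilinMap.toQuadraticMap (-(Bdot n))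

/-- Let `M` be a module over the Clifford algebra of `Q(v) = -B(v,v)` on
`ℂ^{2m}`, let `e₁, f₁, …, e_m, f_m` be an orthonormal system and
`ε̄_j = (e_j + i f_j)/√2`. If `σ ∈ M` satisfies `ε̄_j·σ = 0` for all `j`, then the complex
volume element `ω_ℂ = i^m·e₁·f₁·⋯·e_m·f_m` acts as the identity on `σ`: `ω_ℂ·σ = σ`. -/
theorem complex_volume_acts_as_id (m : ℕ) (e f : Fin m → (Fin (2 * m) → ℂ))
    (hee : ∀ j k, Bdot (2 * m) (e j) (e k) = if j = k then 1 else 0)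
    (hff : ∀ j k, Bdot (2 * m) (f j) (f k) = if j = k then 1 else 0)
    (hef : ∀ j k, Bdot (2 * m) (e j) (f k) = 0)
    (M : Type*) [AddCommGroup M] [Module ℂ M]
    [Module (CliffordAlgebra (QCl (2 * m))) M]
    [IsScalarTower ℂ (CliffordAlgebra (QCl (2 * m))) M]
    (σ : M)
    (hσ : ∀ j, CliffordAlgebra.ι (QCl (2 * m))
      (((Real.sqrt 2 : ℂ))⁻¹ • (e j + Complex.I • f j)) • σ = 0)
    (ωC : CliffordAlgebra (QCl (2 * m)))
    (hωC : ωC = Complex.I ^ m •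
      ((List.finRange m).map (fun j =>
        CliffordAlgebra.ι (QCl (2 * m)) (e j) *
          CliffordAlgebra.ι (QCl (2 * m)) (f j))).prod) :
    ωC • σ = σ := by
  set ι := CliffordAlgebra.ι (QCl (2 * m)) with hι
  have hQf : ∀ j, QCl (2 * m) (f j) = -1 := by
    intro j
    simp [QCl, LinearMap.BilinMap.toQuadraticMap_apply, hff j j]
  have hpolar : ∀ j, QuadraticMap.polar (QCl (2 * m)) (e j) (f j) = 0 := by
    intro j
    have hsymm : Bdot (2 * m) (f j) (e j) = 0 := by
      have h : Bdot (2 * m) (f j) (e j) = Bdot (2 * m) (e j) (f j) := by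
        simp [Bdot, mul_comm]
      rw [h, hef j j]
    simp [QuadraticMap.polar, QCl, LinearMap.BilinMap.toQuadraticMap_apply,
      hee j j, hff j j, hef j j, hsymm]
  have hanti : ∀ j, ι (e j) * ι (f j) = -(ι (f j) * ι (e j)) := by
    intro j
    have h := CliffordAlgebra.ι_mul_ι_add_swap (Q := QCl (2 * m)) (e j) (f j)
    rw [hpolar j, map_zero, ← hι] at h
    exact eq_neg_of_add_eq_zero_left h
  have hff2 : ∀ j, ι (f j) * ι (f j) = algebraMap ℂ _ (-1 : ℂ) := by
    intro j
    rw [hι, CliffordAlgebra.ι_sq_scalar, hQf j]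
  have hs2 : ((Real.sqrt 2 : ℂ)) ≠ 0 := by
    exact Complex.ofReal_ne_zero.mpr (by positivity)
  have hann : ∀ j, ι (e j) • σ = -(Complex.I • (ι (f j) • σ)) := by
    intro j
    have h := hσ j
    rw [map_smul, smul_assoc] at h
    have h2 := congrArg (fun x => ((Real.sqrt 2 : ℂ)) • x) h
    simp only [smul_smul, mul_inv_cancel₀ hs2, one_smul, smul_zero] at h2
    rw [map_add, map_smul, add_smul, smul_assoc] at h2
    exact eq_neg_of_add_eq_zero_left h2
  have key : ∀ j : Fin m, Complex.I • (ι (e j) • (ι (f j) • σ)) = σ := by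
    intro j
    have h1 : ι (f j) • (-(Complex.I • (ι (f j) • σ))) =
        -(Complex.I • ((ι (f j) * ι (f j)) • σ)) := by
      rw [smul_neg, smul_comm, mul_smul]
    have h2 : ι (e j) • (ι (f j) • σ) = -(ι (f j) • (ι (e j) • σ)) := by
      rw [← mul_smul, ← mul_smul, hanti j, neg_smul]
    rw [h2, hann j, h1, hff2 j, algebraMap_smul]
    simp [smul_smul, Complex.I_mul_I]
  have main : ∀ l : List (Fin m),
      (Complex.I ^ l.length) • (((l.map (fun j => ι (e j) * ι (f j))).prod) • σ) = σ := by
    intro l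
    induction l with
    | nil => simp
    | cons a t ih =>
      simp only [List.map_cons, List.prod_cons, List.length_cons, pow_succ, mul_smul]
      rw [smul_comm (Complex.I ^ t.length) Complex.I,
        smul_comm (Complex.I ^ t.length) (ι (e a)),
        smul_comm (Complex.I ^ t.length) (ι (f a)), ih, ← mul_smul (ι (e a)) (ι (f a))]
      rw [mul_smul]
      exact key a
  have hmain := main (List.finRange m)
  rw [List.length_finRange] at hmain
  rw [hωC, smul_assoc]
  exact hmain
end
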